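/- For |z| < 1, log²(1-z)/(1-z) = ∑_{n=0}^∞ ((H_n)² - H_n^{(2)}) z^n. -/

import Mathlib

/-- The generalized harmonic number `H_n^{(m)} = ∑_{k=1}^n 1/k^m` as a real number. -/
noncomputable def genHarmonic (m n : ℕ) : ℝ := ∑ k ∈ Finset.range n, (1 : ℝ) / ((k + 1 : ℝ)) ^ m

/-!
Since `-log (1 - z) = ∑ zⁿ / n`, multiplying by the geometric series gives
`-log (1 - z) / (1 - z) = ∑ Hₙ zⁿ`, and multiplying once more by `-log (1 - z)` gives
`log² (1 - z) / (1 - z) = ∑ (∑_{i + j = n} H_j / i) zⁿ` (Cauchy products of absolutely convergent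
series). The coefficient identity `∑_{i + j = n} H_j / i = Hₙ² - Hₙ⁽²⁾` follows by induction on `n`:
both sides grow by `2 Hₙ / (n + 1)`, on the left by the partial fraction decomposition
`(n + 1) / (i (j + 1)) = 1 / i + 1 / (j + 1)` for `i + j = n`.
-/

open Finset Finset.Nat

section CauchyProduct

variable {R : Type*} [NormedCommRing R]

theorem sum_antidiagonal_mul_pow_mul_mul_pow (a b : ℕ → R) (z : R) (n : ℕ) :
    ∑ p ∈ antidiagonal n, a p.1 * z ^ p.1 * (b p.2 * z ^ p.2) =
      (∑ p ∈ antidiagonal n, a p.1 * b p.2) * z ^ n := by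
  rw [sum_mul]
  refine sum_congr rfl fun p hp => ?_
  rw [← mem_antidiagonal.mp hp, pow_add]
  ring

theorem HasSum.mul_pow_of_summable_norm [CompleteSpace R] {a b : ℕ → R} {z A B : R}
    (ha : HasSum (fun n => a n * z ^ n) A) (hb : HasSum (fun n => b n * z ^ n) B)
    (ha' : Summable fun n => ‖a n * z ^ n‖) (hb' : Summable fun n => ‖b n * z ^ n‖) :
    HasSum (fun n => (∑ p ∈ antidiagonal n, a p.1 * b p.2) * z ^ n) (A * B) := by
  have h := (summable_norm_sum_mul_antidiagonal_of_summable_norm ha' hb').of_norm.hasSum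
  rw [← tsum_mul_tsum_eq_tsum_sum_antidiagonal_of_summable_norm ha' hb', ha.tsum_eq,
    hb.tsum_eq] at h
  simpa only [sum_antidiagonal_mul_pow_mul_mul_pow] using h

end CauchyProduct

-- The `n = 0` term vanishes because `(0 : ℝ)⁻¹ = 0`.
theorem hasSum_inv_mul_pow_neg_log {z : ℝ} (hz : |z| < 1) :
    HasSum (fun n : ℕ => (n : ℝ)⁻¹ * z ^ n) (-Real.log (1 - z)) := by
  rw [← hasSum_nat_add_iff' 1]
  simpa [div_eq_inv_mul] using Real.hasSum_pow_div_log_of_abs_lt_one hz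

theorem genHarmonic_one (n : ℕ) : genHarmonic 1 n = ∑ k ∈ range n, ((k : ℝ) + 1)⁻¹ := by
  simp [genHarmonic]

@[simp]
theorem genHarmonic_zero (m : ℕ) : genHarmonic m 0 = 0 := by
  simp [genHarmonic]

theorem genHarmonic_succ (m n : ℕ) :
    genHarmonic m (n + 1) = genHarmonic m n + (((n : ℝ) + 1) ^ m)⁻¹ := by
  simp [genHarmonic, sum_range_succ]

theorem sum_antidiagonal_inv_mul_one (n : ℕ) :
    ∑ p ∈ antidiagonal n, ((p.1 : ℝ)⁻¹ * 1) = genHarmonic 1 n := by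
  rw [sum_antidiagonal_eq_sum_range_succ (fun i _ => ((i : ℝ)⁻¹ * 1)), sum_range_succ',
    genHarmonic_one]
  simp

theorem sum_antidiagonal_inv_succ_mul_inv_succ (n : ℕ) :
    ∑ p ∈ antidiagonal n, ((p.1 : ℝ) + 1)⁻¹ * ((p.2 : ℝ) + 1)⁻¹ =
      2 * genHarmonic 1 (n + 1) / ((n : ℝ) + 2) := by
  have hH : ∑ p ∈ antidiagonal n, ((p.1 : ℝ) + 1)⁻¹ = genHarmonic 1 (n + 1) := by
    rw [sum_antidiagonal_eq_sum_range_succ (fun i _ => ((i : ℝ) + 1)⁻¹), genHarmonic_one]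
  have hH' : ∑ p ∈ antidiagonal n, ((p.2 : ℝ) + 1)⁻¹ = genHarmonic 1 (n + 1) := by
    rw [← hH, ← sum_antidiagonal_swap]
    rfl
  have hsplit : ∀ p ∈ antidiagonal n, ((p.1 : ℝ) + 1)⁻¹ * ((p.2 : ℝ) + 1)⁻¹ =
      (((p.1 : ℝ) + 1)⁻¹ + ((p.2 : ℝ) + 1)⁻¹) / ((n : ℝ) + 2) := by
    intro p hp
    rw [← mem_antidiagonal.mp hp]
    push_cast
    field_simp
    ring
  rw [sum_congr rfl hsplit, ← sum_div, sum_add_distrib, hH, hH']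
  ring

theorem sum_antidiagonal_inv_succ_mul_genHarmonic (n : ℕ) :
    ∑ p ∈ antidiagonal n, ((p.1 : ℝ) + 1)⁻¹ * genHarmonic 1 p.2 =
      genHarmonic 1 (n + 1) ^ 2 - genHarmonic 2 (n + 1) := by
  induction n with
  | zero => simp [genHarmonic_succ]
  | succ n ih =>
    have hstep (p : ℕ × ℕ) : ((p.1 : ℝ) + 1)⁻¹ * genHarmonic 1 (p.2 + 1) =
        ((p.1 : ℝ) + 1)⁻¹ * genHarmonic 1 p.2 + ((p.1 : ℝ) + 1)⁻¹ * ((p.2 : ℝ) + 1)⁻¹ := by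
      rw [genHarmonic_succ, pow_one, mul_add]
    rw [sum_antidiagonal_succ', genHarmonic_succ 1 (n + 1), genHarmonic_succ 2 (n + 1)]
    simp only [hstep, sum_add_distrib, ih, sum_antidiagonal_inv_succ_mul_inv_succ]
    simp only [genHarmonic_zero, mul_zero, zero_add]
    push_cast
    field_simp
    ring

theorem sum_antidiagonal_inv_mul_genHarmonic (n : ℕ) :
    ∑ p ∈ antidiagonal n, (p.1 : ℝ)⁻¹ * genHarmonic 1 p.2 =
      genHarmonic 1 n ^ 2 - genHarmonic 2 n := by
  cases n with
  | zero => simp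
  | succ n =>
    rw [sum_antidiagonal_succ]
    simpa using sum_antidiagonal_inv_succ_mul_genHarmonic n

theorem log_sq_generating_function (z : ℝ) (hz : |z| < 1) :
    (Real.log (1 - z)) ^ 2 / (1 - z) =
      ∑' n : ℕ, ((genHarmonic 1 n) ^ 2 - genHarmonic 2 n) * z ^ n := by
  have hlog := hasSum_inv_mul_pow_neg_log hz
  have hgeom : HasSum (fun n : ℕ => 1 * z ^ n) (1 - z)⁻¹ := by
    simpa using hasSum_geometric_of_abs_lt_one hz
  have hH := hlog.mul_pow_of_summable_norm hgeom hlog.summable.abs hgeom.summable.abs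
  simp only [sum_antidiagonal_inv_mul_one] at hH
  have hH2 := hlog.mul_pow_of_summable_norm hH hlog.summable.abs hH.summable.abs
  simp only [sum_antidiagonal_inv_mul_genHarmonic] at hH2
  rw [hH2.tsum_eq]
  ring
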